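/- Let A = {0,1}, k = 2k'+1 odd, n ≥ k+1, n0 = n−k+1, and J = {n0, n0+2, …, n−2, n}. For every j ∈ J with j ≠ n0, the sequence of pairs ((Q^{[j]}_{[i]}, C^{[j]}_{[i]}))_{0 ≤ i ≤ 2^n−1} is 2^{j+1}-periodic. -/

import Mathlib

/-- Hamming distance between two words (lists) of the same length:
the number of positions in which they differ. -/
def hammingL {α : Type*} [DecidableEq α] (w w' : List α) : ℕ :=
  ((w.zip w').filter fun q => decide (q.1 ≠ q.2)).length

/-- `w` (restricted to indices `< N`) is a `σ_k`-Gray cycle over `X`: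
its terms are pairwise distinct and enumerate `X` (a bijection from `[0, N-1]` onto `X`),
two consecutive terms have the same length and Hamming distance exactly `k`, and so do
the first and the last term. -/
def IsGrayCycleOn {α : Type*} [DecidableEq α] (k N : ℕ) (w : ℕ → List α)
    (X : Set (List α)) : Prop :=
  Set.BijOn w (Set.Iio N) X ∧
  (∀ i, 1 ≤ i → i < N →
    (w (i - 1)).length = (w i).length ∧ hammingL (w (i - 1)) (w i) = k) ∧
  (0 < N → (w (N - 1)).length = (w 0).length ∧ hammingL (w (N - 1)) (w 0) = k)

/-- The bit complement `θ : 0 ↔ 1` on the binary alphabet `{0,1}`. -/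
def cpl (x : Fin 2) : Fin 2 := x + 1

/-- The bit complement extended letterwise to binary words. -/
def cplW (w : List (Fin 2)) : List (Fin 2) := w.map cpl

/-- The reflected binary Gray code `g^{m,1}` over words of length `m`:
`g^{0,1} = (ε)` and `g^{m+1,1} = (0·g^{m,1}, 1·(g^{m,1})^R)`. -/
def binGray : ℕ → List (List (Fin 2))
  | 0 => [[]]
  | m + 1 =>
      (binGray m).map (fun w => 0 :: w) ++ (binGray m).reverse.map (fun w => 1 :: w)

/-- The sequence `γ^{n0,1}`: `γ^{n0,1}_{[0]} = g^{n0,1}_{[0]}` and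
`γ^{n0,1}_{[i]} = g^{n0,1}_{[2^{n0} - i]}` for `1 ≤ i ≤ 2^{n0} - 1`. -/
def gamma1 (n0 i : ℕ) : List (Fin 2) :=
  if i = 0 then (binGray n0).getD 0 [] else (binGray n0).getD (2 ^ n0 - i) []

/-- The sequence `ρ^{n0,1}`: `ρ^{n0,1}_{[0]} = g^{n0,1}_{[2^{n0}-1]}` and
`ρ^{n0,1}_{[i]} = g^{n0,1}_{[i-1]}` for `1 ≤ i ≤ 2^{n0} - 1`. -/
def rho1 (n0 i : ℕ) : List (Fin 2) :=
  if i = 0 then (binGray n0).getD (2 ^ n0 - 1) [] else (binGray n0).getD (i - 1) []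

/-- `grSeq n0 true t i` (resp. `grSeq n0 false t i`) is the term of index `i` of the
sequence `γ^{n0+2t, 2t+1}` (resp. `ρ^{n0+2t, 2t+1}`), built inductively: the base cases
are `γ^{n0,1}` and `ρ^{n0,1}`, and, writing `i = q·2^m + r` with `m = n0 + 2t` and
`r < 2^m`, `γ^{m+2, (2t+1)+2}_{[i]}` is `θ^r(00)·γ^{m,2t+1}_{[r]}`, `θ^r(01)·ρ^{m,2t+1}_{[r]}`,
`θ^r(11)·γ^{m,2t+1}_{[r]}`, `θ^r(10)·ρ^{m,2t+1}_{[r]}` according to `q = 0, 1, 2, 3`, and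
`ρ^{m+2, (2t+1)+2}_{[i]}` is `θ^r(10)·γ^{m,2t+1}_{[r]}`, `θ^r(11)·ρ^{m,2t+1}_{[r]}`,
`θ^r(01)·γ^{m,2t+1}_{[r]}`, `θ^r(00)·ρ^{m,2t+1}_{[r]}` according to `q = 0, 1, 2, 3`. -/
def grSeq (n0 : ℕ) : Bool → ℕ → ℕ → List (Fin 2)
  | b, 0, i => if b then gamma1 n0 i else rho1 n0 i
  | b, t + 1, i =>
      cplW^[i % 2 ^ (n0 + 2 * t)]
        (if b then
          (if i / 2 ^ (n0 + 2 * t) = 0 then [0, 0]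
           else if i / 2 ^ (n0 + 2 * t) = 1 then [0, 1]
           else if i / 2 ^ (n0 + 2 * t) = 2 then [1, 1] else [1, 0])
         else
          (if i / 2 ^ (n0 + 2 * t) = 0 then [1, 0]
           else if i / 2 ^ (n0 + 2 * t) = 1 then [1, 1]
           else if i / 2 ^ (n0 + 2 * t) = 2 then [0, 1] else [0, 0])) ++
        grSeq n0 (i / 2 ^ (n0 + 2 * t) % 2 == 0) t (i % 2 ^ (n0 + 2 * t))

/-- For odd `k` and `n ≥ k + 1`, `gammaNK n k i` is the term `γ^{n,k}_{[i]}`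
(here `n0 = n - k + 1` and `k = 2·(k/2) + 1`). -/
def gammaNK (n k i : ℕ) : List (Fin 2) := grSeq (n + 1 - k) true (k / 2) i

/-- For odd `k` and `n ≥ k + 1`, `rhoNK n k i` is the term `ρ^{n,k}_{[i]}`. -/
def rhoNK (n k i : ℕ) : List (Fin 2) := grSeq (n + 1 - k) false (k / 2) i

/-! Stripping the two leading letters of `γ^{m+2,k+2}_{[i]}` leaves `γ^{m,k}` or `ρ^{m,k}` at index
`i mod 2^m`, the choice being made by bit `m` of `i`. Iterating, the suffix of length `j` of
`γ^{n,k}_{[i]}` is `γ^{j,·}` or `ρ^{j,·}` at index `i mod 2^j`, chosen by bit `j` of `i`; so it depends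
only on `i mod 2^{j+1}`, and so does its two-letter prefix `C^{[j]}_{[i]}`. -/

theorem Nat.div_two_pow_mod_two_eq_of_mod_eq {a M i i' : ℕ} (ha : a < M)
    (h : i % 2 ^ M = i' % 2 ^ M) : i / 2 ^ a % 2 = i' / 2 ^ a % 2 := by
  have hdvd : 2 ^ a * 2 ∣ 2 ^ M := by
    rw [← pow_succ]
    exact pow_dvd_pow 2 ha
  rw [← Nat.mod_mul_right_div_self, ← Nat.mod_mul_right_div_self i',
    ← Nat.mod_mod_of_dvd i hdvd, ← Nat.mod_mod_of_dvd i' hdvd, h]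

theorem cplW_iterate_length (r : ℕ) (w : List (Fin 2)) : (cplW^[r] w).length = w.length := by
  induction r with
  | zero => rfl
  | succ r ih => rw [Function.iterate_succ_apply', cplW, List.length_map, ih]

theorem grSeq_succ_drop_two (n0 t : ℕ) (b : Bool) (i : ℕ) :
    (grSeq n0 b (t + 1) i).drop 2 =
      grSeq n0 (i / 2 ^ (n0 + 2 * t) % 2 == 0) t (i % 2 ^ (n0 + 2 * t)) := by
  rw [grSeq]
  apply List.drop_left'
  rw [cplW_iterate_length]
  split_ifs <;> rfl

theorem grSeq_drop_eq (n0 u d : ℕ) (b : Bool) (i : ℕ) :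
    (grSeq n0 b (u + d + 1) i).drop (2 * (d + 1)) =
      grSeq n0 (i / 2 ^ (n0 + 2 * u) % 2 == 0) u (i % 2 ^ (n0 + 2 * u)) := by
  induction d generalizing b i with
  | zero => exact grSeq_succ_drop_two n0 u b i
  | succ d ih =>
    set M := n0 + 2 * (u + d + 1)
    have hbit : i % 2 ^ M / 2 ^ (n0 + 2 * u) % 2 = i / 2 ^ (n0 + 2 * u) % 2 :=
      Nat.div_two_pow_mod_two_eq_of_mod_eq (by omega) (Nat.mod_mod _ _)
    have hlow : i % 2 ^ M % 2 ^ (n0 + 2 * u) = i % 2 ^ (n0 + 2 * u) :=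
      Nat.mod_mod_of_dvd i (pow_dvd_pow 2 (by omega))
    rw [show 2 * (d + 1 + 1) = 2 + 2 * (d + 1) by ring, ← List.drop_drop,
      show u + (d + 1) + 1 = u + d + 1 + 1 by ring, grSeq_succ_drop_two, ih, hbit, hlow]

theorem grSeq_drop_eq_of_mod_eq (n0 u d : ℕ) (b b' : Bool) {i i' : ℕ}
    (h : i % 2 ^ (n0 + 2 * u + 1) = i' % 2 ^ (n0 + 2 * u + 1)) :
    (grSeq n0 b (u + d + 1) i).drop (2 * (d + 1)) =
      (grSeq n0 b' (u + d + 1) i').drop (2 * (d + 1)) := by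
  have hbit : i / 2 ^ (n0 + 2 * u) % 2 = i' / 2 ^ (n0 + 2 * u) % 2 :=
    Nat.div_two_pow_mod_two_eq_of_mod_eq (Nat.lt_succ_self _) h
  have hlow : i % 2 ^ (n0 + 2 * u) = i' % 2 ^ (n0 + 2 * u) := by
    have hdvd : 2 ^ (n0 + 2 * u) ∣ 2 ^ (n0 + 2 * u + 1) := pow_dvd_pow 2 (Nat.le_succ _)
    rw [← Nat.mod_mod_of_dvd i hdvd, ← Nat.mod_mod_of_dvd i' hdvd, h]
  rw [grSeq_drop_eq, grSeq_drop_eq, hbit, hlow]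

theorem statement10_general (n k : ℕ) (hk : Odd k) (hn : k + 1 ≤ n) :
    ∀ j, n - k + 1 < j → j ≤ n → (j - (n - k + 1)) % 2 = 0 →
    ∀ i, i + 2 ^ (j + 1) ≤ 2 ^ n - 1 →
      ((i + 2 ^ (j + 1)) % 2 ^ (j + 1) / 2 ^ (j - 2),
        ((gammaNK n k (i + 2 ^ (j + 1))).drop (n - j)).take 2) =
      (i % 2 ^ (j + 1) / 2 ^ (j - 2),
        ((gammaNK n k i).drop (n - j)).take 2) := by
  intro j _ hjle hj i hi
  have hk2 : k % 2 = 1 := Nat.odd_iff.mp hk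
  -- `j = n` is excluded because then no index `i` is in range.
  have hjn : j + 1 < n :=
    (Nat.pow_lt_pow_iff_right one_lt_two).mp (by have := Nat.one_le_two_pow (n := n); omega)
  set u := (j - (n - k + 1)) / 2
  set d := k / 2 - u - 1
  have hperiod :
      (i + 2 ^ (j + 1)) % 2 ^ (n - k + 1 + 2 * u + 1) = i % 2 ^ (n - k + 1 + 2 * u + 1) := by
    rw [show n - k + 1 + 2 * u + 1 = j + 1 by omega, Nat.add_mod_right]
  rw [Nat.add_mod_right, gammaNK, gammaNK, show n + 1 - k = n - k + 1 by omega,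
    show k / 2 = u + d + 1 by omega, show n - j = 2 * (d + 1) by omega,
    grSeq_drop_eq_of_mod_eq _ u d true true hperiod]

/-- Let `k` be odd, `n ≥ k + 1`, `n0 = n - k + 1`, and `J = {n0, n0+2, …, n-2, n}`.
For `j ∈ J` with `j ≠ n0`, writing `μ(i,j) = i mod 2^{j+1}`,
`Q^{[j]}_{[i]} = ⌊μ(i,j)/2^{j-2}⌋` and `C^{[j]}_{[i]}` the two-letter factor of
`γ^{n,k}_{[i]}` in positions `j, j-1` from the right, the sequence of pairs
`((Q^{[j]}_{[i]}, C^{[j]}_{[i]}))_{0 ≤ i ≤ 2^n-1}` is `2^{j+1}`-periodic. -/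
theorem statement10 (n k : ℕ) (hk1 : 1 ≤ k) (hk : Odd k) (hn : k + 1 ≤ n) :
    ∀ j, n - k + 1 < j → j ≤ n → (j - (n - k + 1)) % 2 = 0 →
    ∀ i, i + 2 ^ (j + 1) ≤ 2 ^ n - 1 →
      ((i + 2 ^ (j + 1)) % 2 ^ (j + 1) / 2 ^ (j - 2),
        ((gammaNK n k (i + 2 ^ (j + 1))).drop (n - j)).take 2) =
      (i % 2 ^ (j + 1) / 2 ^ (j - 2),
        ((gammaNK n k i).drop (n - j)).take 2) :=
  statement10_general n k hk hn
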